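/- arXiv:math/0406048 — 8 statements merged into one kernel-verified Lean document; each statement's English description precedes it below -/
import Mathlib

section
/- For pure imaginary quaternions M and N with Re(M N*) = 0 (i.e., M ⊥ N with respect to the inner product ⟨x,y⟩ = Re(x y*)), the commutator of their exponentials satisfies exp(M) * exp(N) - exp(N) * exp(M) = 2 * (sin |M| / |M|) * (sin |N| / |N|) * (M * N), provided M ≠ 0 and N ≠ 0. -/
/-!
On pure imaginary quaternions `exp M = cos ‖M‖ + (sin ‖M‖ / ‖M‖) • M`, and the real parts are
central, so the commutator of the exponentials is `(sin ‖M‖ / ‖M‖) (sin ‖N‖ / ‖N‖) (M N - N M)`.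
Pure imaginary quaternions satisfy `star (M N) = N M`, hence `M N + N M = 2 Re (M N)`, and
`Re (M N) = -Re (M * star N) = 0`: orthogonal ones anticommute, so `M N - N M = 2 M N`.
-/

open Quaternion NormedSpace

theorem commutator_algebraMap_add_smul {R A : Type*} [CommRing R] [Ring A] [Algebra R A]
    (c c' s s' : R) (x y : A) :
    (algebraMap R A c + s • x) * (algebraMap R A c' + s' • y) -
        (algebraMap R A c' + s' • y) * (algebraMap R A c + s • x) =
      (s * s') • (x * y - y * x) := by
  simp only [add_mul, mul_add, Algebra.commutes, smul_mul_smul_comm, ← map_mul, mul_comm c c',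
    mul_comm s' s, smul_sub]
  abel

namespace Quaternion

theorem star_eq_neg_of_re_eq_zero {R : Type*} [CommRing R] {a : ℍ[R]} (ha : a.re = 0) :
    star a = -a := by
  rw [star_eq_two_re_sub, ha, mul_zero, coe_zero, zero_sub]

theorem mul_comm_eq_neg_of_re_mul_star_eq_zero {R : Type*} [CommRing R] {a b : ℍ[R]}
    (ha : a.re = 0) (hb : b.re = 0) (hab : (a * star b).re = 0) : b * a = -(a * b) := by
  have hstar : star (a * b) = b * a := by
    rw [star_mul, star_eq_neg_of_re_eq_zero ha, star_eq_neg_of_re_eq_zero hb, neg_mul_neg]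
  have hre : (a * b).re = 0 := by
    rwa [star_eq_neg_of_re_eq_zero hb, mul_neg, re_neg, neg_eq_zero] at hab
  rw [← hstar, eq_neg_iff_add_eq_zero, add_comm, self_add_star, hre]
  simp

end Quaternion

theorem commutator_exp_of_orthogonal_general (M N : ℍ[ℝ])
    (hM : M.re = 0) (hN : N.re = 0) (horth : (M * star N).re = 0) :
    exp M * exp N - exp N * exp M =
      (2 * (Real.sin ‖M‖ / ‖M‖) * (Real.sin ‖N‖ / ‖N‖)) • (M * N) := by
  rw [exp_of_re_eq_zero M hM, exp_of_re_eq_zero N hN, ← algebraMap_def,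
    commutator_algebraMap_add_smul, mul_comm_eq_neg_of_re_mul_star_eq_zero hM hN horth,
    sub_neg_eq_add, ← two_smul ℝ, smul_smul, mul_comm, mul_assoc]

theorem commutator_exp_of_orthogonal (M N : ℍ[ℝ])
    (hM : M.re = 0) (hN : N.re = 0) (horth : (M * star N).re = 0)
    (hM0 : M ≠ 0) (hN0 : N ≠ 0) :
    exp M * exp N - exp N * exp M =
      (2 * (Real.sin ‖M‖ / ‖M‖) * (Real.sin ‖N‖ / ‖N‖)) • (M * N) :=
  commutator_exp_of_orthogonal_general M N hM hN horth
end

section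
/- Let M and N be pure imaginary quaternions, and write N = N₁ + N₂ where N₁ = β • M for some real β and ⟨M, N₂⟩ = 0. If M ≠ 0 and N ≠ 0, then the anticommutator satisfies exp(M) * exp(N) + exp(N) * exp(M) = 2 * cos |M| * exp(N) + 2 * (sin |M| / |M|) * M * (cos |N| + (sin |N| / |N|) • N₁). -/
/-!
For pure imaginary `q`, `exp q = cos ‖q‖ + (sin ‖q‖ / ‖q‖) • q`, so expanding the anticommutator
leaves a single term that does not commute, `M * N + N * M`. Pure imaginary quaternions satisfy
`x * y + y * x = 2 (x * y).re`, so the part `N₂` orthogonal to `M` anticommutes with `M`, and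
`M * N + N * M = (2 * β) • (M * M)`.
-/

open Quaternion NormedSpace

namespace Quaternion

variable {R : Type*} [CommRing R]

theorem coe_eq_smul_one (r : R) : (r : ℍ[R]) = r • 1 := by
  rw [← coe_mul_eq_smul, mul_one]

variable [NoZeroDivisors R] [CharZero R] {x y : ℍ[R]}

theorem star_mul_of_re_eq_zero (hx : x.re = 0) (hy : y.re = 0) : star (x * y) = y * x := by
  rw [star_mul, star_eq_neg.2 hx, star_eq_neg.2 hy, neg_mul_neg]

theorem mul_add_mul_of_re_eq_zero (hx : x.re = 0) (hy : y.re = 0) :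
    x * y + y * x = ↑(2 * (x * y).re) := by
  rw [← star_mul_of_re_eq_zero hx hy, self_add_star']

theorem mul_add_mul_smul_add_of_re_mul_star_eq_zero (hx : x.re = 0) (hy : y.re = 0)
    (horth : (x * star y).re = 0) (β : R) :
    x * (β • x + y) + (β • x + y) * x = (2 * β) • (x * x) := by
  have hxy : (x * y).re = 0 := by
    rwa [star_eq_neg.2 hy, mul_neg, re_neg, neg_eq_zero] at horth
  have hanti : x * y + y * x = 0 := by
    rw [mul_add_mul_of_re_eq_zero hx hy, hxy, mul_zero, coe_zero]
  calc x * (β • x + y) + (β • x + y) * x = (2 * β) • (x * x) + (x * y + y * x) := by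
        simp only [mul_add, add_mul, mul_smul_comm, smul_mul_assoc]; module
    _ = (2 * β) • (x * x) := by rw [hanti, add_zero]

end Quaternion

theorem anticommutator_exp_general (M N N₁ N₂ : ℍ[ℝ]) (β : ℝ)
    (hM : M.re = 0) (hN : N.re = 0)
    (hsum : N = N₁ + N₂) (hN₁ : N₁ = β • M) (horth : (M * star N₂).re = 0) :
    NormedSpace.exp M * NormedSpace.exp N + NormedSpace.exp N * NormedSpace.exp M =
      (2 * Real.cos ‖M‖) • NormedSpace.exp N +
        (2 * (Real.sin ‖M‖ / ‖M‖)) •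
          (M * ((Real.cos ‖N‖ : ℍ[ℝ]) + (Real.sin ‖N‖ / ‖N‖) • N₁)) := by
  subst hN₁
  have hN₂ : N₂.re = 0 := by
    simpa only [hsum, re_add, re_smul, hM, smul_zero, zero_add] using hN
  have hanti : N * M = (2 * β) • (M * M) - M * N := by
    rw [eq_sub_iff_add_eq', hsum, mul_add_mul_smul_add_of_re_mul_star_eq_zero hM hN₂ horth]
  rw [exp_of_re_eq_zero M hM, exp_of_re_eq_zero N hN]
  simp only [coe_eq_smul_one, mul_add, add_mul, smul_mul_assoc, mul_smul_comm, one_mul, mul_one,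
    hanti, smul_sub]
  module

theorem anticommutator_exp (M N N₁ N₂ : ℍ[ℝ]) (β : ℝ)
    (hM : M.re = 0) (hN : N.re = 0)
    (hsum : N = N₁ + N₂) (hN₁ : N₁ = β • M) (horth : (M * star N₂).re = 0)
    (hM0 : M ≠ 0) (hN0 : N ≠ 0) :
    NormedSpace.exp M * NormedSpace.exp N + NormedSpace.exp N * NormedSpace.exp M =
      (2 * Real.cos ‖M‖) • NormedSpace.exp N +
        (2 * (Real.sin ‖M‖ / ‖M‖)) •
          (M * ((Real.cos ‖N‖ : ℍ[ℝ]) + (Real.sin ‖N‖ / ‖N‖) • N₁)) :=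
  anticommutator_exp_general M N N₁ N₂ β hM hN hsum hN₁ horth
end

section
/- Let M and N be pure imaginary quaternions with decomposition N = N₁ + N₂, N₁ = β • M (β ∈ ℝ), ⟨M, N₂⟩ = 0, M ≠ 0, N ≠ 0. Then exp(N) * exp(M) = cos |M| * exp(N) + (sin |M| / |M|) * M * exp(N₁ - N₂). -/
open Quaternion NormedSpace

/-! Writing `exp M = cos ‖M‖ + (sin ‖M‖ / ‖M‖) M` reduces the claim to `exp N * M = M * exp (N₁ - N₂)`.
Since `M` commutes with `N₁ = β M` and anticommutes with the orthogonal pure imaginary `N₂`, it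
conjugates `N₁ - N₂` into `N₁ + N₂ = N`, hence also `exp (N₁ - N₂)` into `exp N`. -/

theorem Quaternion.mul_eq_neg_mul_of_re_mul_star_eq_zero {R : Type*} [CommRing R] {p q : ℍ[R]}
    (hp : p.re = 0) (hq : q.re = 0) (horth : (p * star q).re = 0) : p * q = -(q * p) := by
  rw [re_mul] at horth
  simp only [re_star, imI_star, imJ_star, imK_star, hp, hq] at horth
  ext <;> simp only [re_mul, imI_mul, imJ_mul, imK_mul, re_neg, imI_neg, imJ_neg, imK_neg, hp, hq]
  · linear_combination -2 * horth
  all_goals ring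

theorem exp_mul_exp_decomposition_general (M N N₁ N₂ : ℍ[ℝ]) (β : ℝ)
    (hM : M.re = 0) (hN : N.re = 0)
    (hsum : N = N₁ + N₂) (hN₁ : N₁ = β • M) (horth : (M * star N₂).re = 0) :
    NormedSpace.exp N * NormedSpace.exp M =
      (Real.cos ‖M‖) • NormedSpace.exp N +
        (Real.sin ‖M‖ / ‖M‖) • (M * NormedSpace.exp (N₁ - N₂)) := by
  -- `SemiconjBy.exp_right` is stated for Banach algebras over `ℚ`
  let +nondep : NormedAlgebra ℚ ℍ := .restrictScalars ℚ ℝ ℍ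
  have hN₂ : N₂.re = 0 := by simpa [hsum, hN₁, hM] using hN
  have hconj : SemiconjBy M (N₁ - N₂) N := by
    rw [SemiconjBy, hsum, hN₁, mul_sub, add_mul,
      mul_eq_neg_mul_of_re_mul_star_eq_zero hM hN₂ horth, sub_neg_eq_add, mul_smul_comm,
      smul_mul_assoc]
  rw [hconj.exp_right.eq, exp_of_re_eq_zero M hM, mul_add, mul_coe_eq_smul, mul_smul_comm]

theorem exp_mul_exp_decomposition (M N N₁ N₂ : ℍ[ℝ]) (β : ℝ)
    (hM : M.re = 0) (hN : N.re = 0)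
    (hsum : N = N₁ + N₂) (hN₁ : N₁ = β • M) (horth : (M * star N₂).re = 0)
    (hM0 : M ≠ 0) (hN0 : N ≠ 0) :
    NormedSpace.exp N * NormedSpace.exp M =
      (Real.cos ‖M‖) • NormedSpace.exp N +
        (Real.sin ‖M‖ / ‖M‖) • (M * NormedSpace.exp (N₁ - N₂)) :=
  exp_mul_exp_decomposition_general M N N₁ N₂ β hM hN hsum hN₁ horth
end

section
/- For pure imaginary quaternions N₁ and N₂ with ⟨N₁, N₂⟩ = 0 and N = N₁ + N₂ ≠ 0, one has exp(N) - exp(N₁ - N₂) = 2 * (sin |N| / |N|) • N₂ and |N₁ - N₂| = |N|. -/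
/-!
On pure imaginary quaternions `exp q = cos ‖q‖ + (sin ‖q‖ / ‖q‖) • q` depends on `q` only through
`‖q‖` and, linearly, through `q` itself. Orthogonality of `N₁` and `N₂` makes `N₁ + N₂` and
`N₁ - N₂` the diagonals of a rectangle, hence of equal length, so the two exponentials differ only
in their linear part, by `(sin ‖N‖ / ‖N‖) • 2 N₂`.
-/

open Quaternion NormedSpace

namespace Quaternion

theorem norm_sub_eq_norm_add_of_re_mul_star_eq_zero {p q : ℍ[ℝ]} (h : (p * star q).re = 0) :
    ‖p - q‖ = ‖p + q‖ := by
  have hinner : inner ℝ q p = 0 := by rw [real_inner_comm, inner_def, h]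
  exact norm_sub_eq_norm_add hinner

theorem exp_sub_exp_of_re_eq_zero_of_norm_eq {p q : ℍ[ℝ]} (hp : p.re = 0) (hq : q.re = 0)
    (hnorm : ‖p‖ = ‖q‖) : exp q - exp p = (Real.sin ‖q‖ / ‖q‖) • (q - p) := by
  rw [exp_of_re_eq_zero q hq, exp_of_re_eq_zero p hp, hnorm, smul_sub]
  abel

end Quaternion

theorem exp_sub_exp_of_orthogonal_general (N₁ N₂ : ℍ[ℝ])
    (h₁ : N₁.re = 0) (h₂ : N₂.re = 0) (horth : (N₁ * star N₂).re = 0) :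
    exp (N₁ + N₂) - exp (N₁ - N₂) =
      (2 * (Real.sin ‖N₁ + N₂‖ / ‖N₁ + N₂‖)) • N₂ ∧
    ‖N₁ - N₂‖ = ‖N₁ + N₂‖ := by
  have hnorm := norm_sub_eq_norm_add_of_re_mul_star_eq_zero horth
  refine ⟨?_, hnorm⟩
  rw [exp_sub_exp_of_re_eq_zero_of_norm_eq (by simp [h₁, h₂]) (by simp [h₁, h₂]) hnorm]
  module

theorem exp_sub_exp_of_orthogonal (N₁ N₂ : ℍ[ℝ])
    (h₁ : N₁.re = 0) (h₂ : N₂.re = 0) (horth : (N₁ * star N₂).re = 0)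
    (hN : N₁ + N₂ ≠ 0) :
    exp (N₁ + N₂) - exp (N₁ - N₂) =
      (2 * (Real.sin ‖N₁ + N₂‖ / ‖N₁ + N₂‖)) • N₂ ∧
    ‖N₁ - N₂‖ = ‖N₁ + N₂‖ :=
  exp_sub_exp_of_orthogonal_general N₁ N₂ h₁ h₂ horth
end

section
/- For a pure imaginary quaternion M and a natural number n ≥ 1, exp(M)^n = exp(n • M), and exp(n • M) = 1 if and only if n * |M| ∈ 2π ℤ. -/
open Quaternion NormedSpace

theorem exp_pow_eq_one_iff (M : ℍ[ℝ]) (hM : M.re = 0) (n : ℕ) (hn : 1 ≤ n) :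
    exp M ^ n = exp ((n : ℝ) • M) ∧
      (exp ((n : ℝ) • M) = 1 ↔ ∃ k : ℤ, (n : ℝ) * ‖M‖ = 2 * Real.pi * k) := by
  have hre : ((n : ℝ) • M).re = 0 := by simp [hM]
  have hnorm : ‖(n : ℝ) • M‖ = (n : ℝ) * ‖M‖ := by
    rw [norm_smul, Real.norm_natCast]
  have hexp := Quaternion.exp_of_re_eq_zero _ hre
  constructor
  · letI : NormedAlgebra ℚ ℍ[ℝ] := NormedAlgebra.restrictScalars ℚ ℝ ℍ[ℝ]
    rw [← exp_nsmul, Nat.cast_smul_eq_nsmul ℝ]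
  constructor
  · intro h
    have : Real.cos ‖(n : ℝ) • M‖ = 1 := by
      have := congrArg QuaternionAlgebra.re (hexp.symm.trans h)
      simpa [hre] using this
    obtain ⟨k, hk⟩ := (Real.cos_eq_one_iff _).1 this
    exact ⟨k, by rw [← hnorm, ← hk]; ring⟩
  · rintro ⟨k, hk⟩
    have hk' : ‖(n : ℝ) • M‖ = (2 * k : ℤ) * Real.pi := by
      rw [hnorm, hk]; push_cast; ring
    rw [hexp, hk', Real.sin_int_mul_pi]
    have : Real.cos ((2 * k : ℤ) * Real.pi) = 1 := by
      rw [Real.cos_eq_one_iff]; exact ⟨k, by push_cast; ring⟩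
    rw [this]
    simp
end

section
/- For every nonzero quaternion ζ and every natural number n ≥ 1, there exists a quaternion z with zⁿ = ζ. -/
/-!
Every quaternion `q` lies in a copy of `ℂ` inside `ℍ`: if `q.im ≠ 0`, the unit pure quaternion
`u = q.im / ‖q.im‖` satisfies `u * u = -1` and `q = q.re + ‖q.im‖ u`, and otherwise `q` is real.
An `n`-th root of `q` is then the image of an `n`-th root in the algebraically closed field `ℂ`.
-/

open Quaternion

namespace Quaternion

theorem mul_self_eq_neg_one_of_re_eq_zero {u : ℍ[ℝ]} (hre : u.re = 0) (hnorm : ‖u‖ = 1) :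
    u * u = -1 := by
  rw [← sq, sq_eq_neg_normSq.mpr hre, normSq_eq_norm_mul_self, hnorm, mul_one, coe_one]

theorem exists_complexAlgHom_apply_eq (q : ℍ[ℝ]) : ∃ (f : ℂ →ₐ[ℝ] ℍ[ℝ]) (w : ℂ), f w = q := by
  rcases eq_or_ne q.im 0 with him | him
  · refine ⟨ofComplex, q.re, ?_⟩
    rw [coe_ofComplex, coeComplex_coe, ← add_zero (q.re : ℍ[ℝ]), ← him, re_add_im]
  have hnorm : ‖q.im‖ ≠ 0 := norm_ne_zero_iff.mpr him
  have hu : (‖q.im‖⁻¹ • q.im) * (‖q.im‖⁻¹ • q.im) = -1 :=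
    mul_self_eq_neg_one_of_re_eq_zero (by simp)
      (by rw [norm_smul, norm_inv, norm_norm, inv_mul_cancel₀ hnorm])
  refine ⟨Complex.liftAux _ hu, ⟨q.re, ‖q.im‖⟩, ?_⟩
  rw [Complex.liftAux_apply, smul_smul, mul_inv_cancel₀ hnorm, one_smul]
  exact q.re_add_im

end Quaternion

theorem quaternion_nth_root_exists_general (ζ : ℍ[ℝ]) (n : ℕ) (hn : 1 ≤ n) :
    ∃ z : ℍ[ℝ], z ^ n = ζ := by
  obtain ⟨f, w, rfl⟩ := exists_complexAlgHom_apply_eq ζ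
  obtain ⟨c, rfl⟩ := IsAlgClosed.exists_pow_nat_eq w hn
  exact ⟨f c, (map_pow f c n).symm⟩

theorem quaternion_nth_root_exists (ζ : ℍ[ℝ]) (hζ : ζ ≠ 0) (n : ℕ) (hn : 1 ≤ n) :
    ∃ z : ℍ[ℝ], z ^ n = ζ :=
  quaternion_nth_root_exists_general ζ n hn
end

section
/- Let P : ℍ → ℍ be a nonconstant 'monic one-sided' polynomial of the form P(z) = z^(n+1) + Σ_{k=0}^{n} a_k * z^k with coefficients a_k ∈ ℍ. Then there exists z₀ ∈ ℍ with P(z₀) = 0. -/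
/-!
For `p` with left coefficients, let `p.conj` conjugate the coefficients. Since `X` is central,
`p * p.conj` has self-adjoint, i.e. real, coefficients, so it has a complex root `z`, and `conj z`
is a root too. Left evaluation of a product obeys `(f * g)(x) = f(v x v⁻¹) v` with `v = g(x)`, so
if `p.conj` does not vanish at `z` (or at `conj z`), then `p` vanishes at a conjugate of that
point. If `p.conj` vanishes at both, splitting `ℍ = ℂ ⊕ ℂ j` shows that `p` vanishes at `z`.
-/

open Polynomial

namespace Polynomial

section DivisionRing

variable {R : Type*} [DivisionRing R]

theorem eval_mul_of_eval_ne_zero (p q : R[X]) {x : R} (hq : q.eval x ≠ 0) :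
    (p * q).eval x = p.eval (q.eval x * x * (q.eval x)⁻¹) * q.eval x := by
  induction p using Polynomial.induction_on' with
  | add p₁ p₂ h₁ h₂ => rw [add_mul, eval_add, eval_add, h₁, h₂, add_mul]
  | monomial k a =>
    have hconj := GroupWithZero.conj_pow₀ (a := (q.eval x)⁻¹) (d := x) (s := k) (inv_ne_zero hq)
    rw [inv_inv] at hconj
    rw [← C_mul_X_pow_eq_monomial, mul_assoc, X_pow_mul, eval_C_mul, eval_mul_X_pow, eval_C_mul,
      eval_X_pow, hconj, mul_assoc, mul_assoc, inv_mul_cancel₀ hq, mul_one]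

theorem isRoot_of_eval_mul_eq_zero {p q : R[X]} {x : R} (h : (p * q).eval x = 0)
    (hq : q.eval x ≠ 0) : p.IsRoot (q.eval x * x * (q.eval x)⁻¹) := by
  rw [eval_mul_of_eval_ne_zero p q hq] at h
  exact (mul_eq_zero.1 h).resolve_right hq

end DivisionRing

section Star

variable {R : Type*} [Semiring R] [StarRing R]

/-- Coefficientwise `star`: for noncommutative `R` it is not `Polynomial.map` of a ring hom. -/
noncomputable def conj (p : R[X]) : R[X] :=
  ⟨.ofCoeff (p.toFinsupp.coeff.mapRange star (star_zero _))⟩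

@[simp]
theorem coeff_conj (p : R[X]) (n : ℕ) : (conj p).coeff n = star (p.coeff n) := rfl

@[simp]
theorem support_conj (p : R[X]) : (conj p).support = p.support := by
  ext n; simp [mem_support_iff]

@[simp]
theorem degree_conj (p : R[X]) : (conj p).degree = p.degree := by
  simp only [degree, support_conj]

@[simp]
theorem natDegree_conj (p : R[X]) : (conj p).natDegree = p.natDegree := by
  simp only [natDegree, degree_conj]

theorem leadingCoeff_conj (p : R[X]) : (conj p).leadingCoeff = star p.leadingCoeff := by
  simp only [leadingCoeff, natDegree_conj, coeff_conj]

theorem star_coeff_mul_conj_self (p : R[X]) (n : ℕ) :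
    star ((p * conj p).coeff n) = (p * conj p).coeff n := by
  rw [coeff_mul, star_sum, ← Finset.Nat.sum_antidiagonal_swap]
  simp

theorem star_eval_conj (p : R[X]) (x : R) :
    star ((conj p).eval x) = ∑ i ∈ Finset.range (p.natDegree + 1), star x ^ i * p.coeff i := by
  rw [eval_eq_sum_range' (by simp : (conj p).natDegree < p.natDegree + 1), star_sum]
  simp

end Star

end Polynomial

namespace Quaternion

open ComplexConjugate

theorem star_coeComplex (z : ℂ) : star (z : ℍ[ℝ]) = ((conj z : ℂ) : ℍ[ℝ]) := by
  ext <;> simp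

theorem coeComplex_pow (z : ℂ) (n : ℕ) : ((z ^ n : ℂ) : ℍ[ℝ]) = (z : ℍ[ℝ]) ^ n :=
  map_pow ofComplex z n

/-- `q ↦ (q - i q i) / 2` and `q ↦ (q + i q i) / 2` project `ℍ` onto `ℂ` and `ℂ j`; right
multiplication by `z` is left multiplication by `z` on the first summand and by `conj z` on the
second. -/
theorem two_smul_mul_coeComplex (q : ℍ[ℝ]) (z : ℂ) :
    (2 : ℝ) • (q * z) =
      z * q - (Complex.I : ℍ[ℝ]) * (z * q) * (Complex.I : ℍ[ℝ]) + ((conj z : ℂ) : ℍ[ℝ]) * q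
        + (Complex.I : ℍ[ℝ]) * (((conj z : ℂ) : ℍ[ℝ]) * q) * (Complex.I : ℍ[ℝ]) := by
  ext <;> simp <;> ring

theorem eval_coeComplex_eq_zero_of_eval_conj (p : ℍ[ℝ][X]) {z : ℂ}
    (h : p.conj.eval (z : ℍ[ℝ]) = 0) (h' : p.conj.eval ((conj z : ℂ) : ℍ[ℝ]) = 0) :
    p.eval (z : ℍ[ℝ]) = 0 := by
  set rightEval : ℂ → ℍ[ℝ] := fun w ↦
    ∑ i ∈ Finset.range (p.natDegree + 1), (w : ℍ[ℝ]) ^ i * p.coeff i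
  have hright : ∀ w, rightEval w = star (p.conj.eval ((conj w : ℂ) : ℍ[ℝ])) := fun w ↦ by
    rw [star_eval_conj, star_coeComplex, Complex.conj_conj]
  have hright_z : rightEval z = 0 := by rw [hright, h', star_zero]
  have hright_conj : rightEval (conj z) = 0 := by rw [hright, Complex.conj_conj, h, star_zero]
  have htwo : (2 : ℝ) • p.eval (z : ℍ[ℝ]) = 0 := by
    calc (2 : ℝ) • p.eval (z : ℍ[ℝ])
        = ∑ i ∈ Finset.range (p.natDegree + 1), (2 : ℝ) • (p.coeff i * ((z ^ i : ℂ) : ℍ[ℝ])) := by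
          simp only [eval_eq_sum_range, Finset.smul_sum, ← coeComplex_pow]
      _ = rightEval z - (Complex.I : ℍ[ℝ]) * rightEval z * (Complex.I : ℍ[ℝ]) + rightEval (conj z)
            + (Complex.I : ℍ[ℝ]) * rightEval (conj z) * (Complex.I : ℍ[ℝ]) := by
          simp only [two_smul_mul_coeComplex]
          simp only [Finset.sum_add_distrib, Finset.sum_sub_distrib, Finset.mul_sum,
            Finset.sum_mul, map_pow, coeComplex_pow, rightEval]
      _ = 0 := by rw [hright_z, hright_conj]; simp
  exact (smul_eq_zero.1 htwo).resolve_left two_ne_zero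

theorem exists_map_eq_mul_conj_self (p : ℍ[ℝ][X]) :
    ∃ G : ℝ[X], G.map (algebraMap ℝ ℍ[ℝ]) = p * p.conj :=
  (mem_lifts _).1 <| (lifts_iff_coeff_lifts _).2 fun n ↦
    ⟨((p * p.conj).coeff n).re, (star_eq_self.1 (star_coeff_mul_conj_self p n)).symm⟩

theorem exists_isRoot (p : ℍ[ℝ][X]) (hp : 0 < p.degree) : ∃ z, p.IsRoot z := by
  obtain ⟨G, hG⟩ := exists_map_eq_mul_conj_self p
  have hlc : p.leadingCoeff ≠ 0 := leadingCoeff_ne_zero.2 (ne_zero_of_degree_gt hp)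
  have hGdeg : 0 < (G.map (algebraMap ℝ ℂ)).degree := by
    rw [degree_map, ← degree_map_eq_of_injective (algebraMap ℝ ℍ[ℝ]).injective, hG,
      ← natDegree_pos_iff_degree_pos,
      natDegree_mul' (by rw [leadingCoeff_conj]; exact mul_ne_zero hlc (star_ne_zero.2 hlc)),
      natDegree_conj]
    have := natDegree_pos_iff_degree_pos.2 hp
    omega
  obtain ⟨z, hz⟩ := Complex.exists_root hGdeg
  rw [IsRoot, eval_map_algebraMap] at hz
  have hroot : ∀ w : ℂ, aeval w G = 0 → (p * p.conj).eval (w : ℍ[ℝ]) = 0 := fun w hw ↦ by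
    rw [← hG, eval_map_algebraMap, ← coe_ofComplex, aeval_algHom_apply, hw, map_zero]
  have hz' : aeval (conj z) G = 0 := by
    rw [← Complex.conjAe_coe, aeval_algHom_apply, hz, map_zero]
  by_cases h : p.conj.eval (z : ℍ[ℝ]) = 0
  · by_cases h' : p.conj.eval ((conj z : ℂ) : ℍ[ℝ]) = 0
    · exact ⟨_, eval_coeComplex_eq_zero_of_eval_conj p h h'⟩
    · exact ⟨_, isRoot_of_eval_mul_eq_zero (hroot _ hz') h'⟩
  · exact ⟨_, isRoot_of_eval_mul_eq_zero (hroot _ hz) h⟩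

end Quaternion

open Quaternion

theorem quaternion_monic_polynomial_has_zero (n : ℕ) (a : ℕ → ℍ[ℝ]) :
    ∃ z₀ : ℍ[ℝ], z₀ ^ (n + 1) + ∑ k ∈ Finset.range (n + 1), a k * z₀ ^ k = 0 := by
  have hlow : (∑ k ∈ Finset.range (n + 1), C (a k) * X ^ k).degree < ↑(n + 1) := by
    simp_rw [← Fin.sum_univ_eq_sum_range (fun k ↦ C (a k) * X ^ k), degree_sum_fin_lt]
  obtain ⟨z, hz⟩ := exists_isRoot (X ^ (n + 1) + ∑ k ∈ Finset.range (n + 1), C (a k) * X ^ k)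
    (by rw [degree_add_eq_left_of_degree_lt (by rwa [degree_X_pow]), degree_X_pow]; positivity)
  exact ⟨z, by simpa [eval_finsetSum, eval_X_pow] using hz⟩
end

section
/- Let P : ℍ → ℍ be a continuous, nonconstant, proper function (|P(z)| → ∞ as |z| → ∞), and let G_l(P) = { g ≠ 0 : P(gz) = P(z) ∀z }. Then every element g ∈ G_l(P) satisfies |g| = 1. -/
open Quaternion

theorem left_stabilizer_norm_one_of_proper (P : ℍ[ℝ] → ℍ[ℝ])
    (hcont : Continuous P) (hnc : ∃ z w : ℍ[ℝ], P z ≠ P w)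
    (hproper : Filter.Tendsto (fun z : ℍ[ℝ] => ‖P z‖) (Filter.cocompact _) Filter.atTop) :
    ∀ g : ℍ[ℝ], g ≠ 0 → (∀ z, P (g * z) = P z) → ‖g‖ = 1 := by
  -- key: for any g' with ‖g'‖ > 1 and ∀ z, P (g' * z) = P z, contradiction
  have key : ∀ g' : ℍ[ℝ], 1 < ‖g'‖ → (∀ z, P (g' * z) = P z) → False := by
    intro g' hg' hinv
    have hpow : ∀ n : ℕ, P (g' ^ n) = P 1 := by
      intro n
      induction n with
      | zero => simp
      | succ n ih => rw [pow_succ', ← ih]; exact hinv _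
    have hnorm : Filter.Tendsto (fun n : ℕ => ‖g' ^ n‖) Filter.atTop Filter.atTop := by
      simpa [norm_pow] using tendsto_pow_atTop_atTop_of_one_lt hg'
    have hcob : Filter.Tendsto (fun n : ℕ => g' ^ n) Filter.atTop
        (Bornology.cobounded ℍ[ℝ]) := tendsto_norm_atTop_iff_cobounded.1 hnorm
    have hcc : Filter.Tendsto (fun n : ℕ => g' ^ n) Filter.atTop
        (Filter.cocompact ℍ[ℝ]) := by
      rwa [← Metric.cobounded_eq_cocompact]
    have := hproper.comp hcc
    simp only [Function.comp_def, hpow] at this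
    obtain ⟨n, hn⟩ := (this.eventually_ge_atTop (‖P 1‖ + 1)).exists
    linarith
  intro g hg hginv
  by_contra hne
  rcases lt_or_gt_of_ne hne with hlt | hgt
  · have hg' : (1 : ℝ) < ‖g⁻¹‖ := by
      rw [norm_inv]
      rw [lt_inv_comm₀ one_pos (norm_pos_iff.2 hg)] at *
      simpa using hlt
    exact key g⁻¹ hg' (fun z => by
      have := hginv (g⁻¹ * z)
      rwa [← mul_assoc, mul_inv_cancel₀ hg, one_mul, eq_comm] at this)
  · exact key g hgt hginv
end
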